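/- If μ(X) < ∞ and p, q are exponents with p(x) ≤ q(x) μ-almost everywhere, then L^{q(·)}(X) ⊆ L^{p(·)}(X). -/
import Mathlib


open MeasureTheory ENNReal Filter Topology

noncomputable def vModular {X : Type*} [MeasurableSpace X] (μ : Measure X)
    (p : X → ℝ≥0∞) (f : X → ℝ) : ℝ≥0∞ :=
  (∫⁻ x in {x | p x < ⊤}, ENNReal.ofReal (|f x| ^ (p x).toReal) ∂μ)
    + essSup (fun x => ENNReal.ofReal |f x|) (μ.restrict {x | p x = ⊤})

noncomputable def vNorm {X : Type*} [MeasurableSpace X] (μ : Measure X)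
    (p : X → ℝ≥0∞) (f : X → ℝ) : ℝ :=
  sInf {t : ℝ | 0 < t ∧ vModular μ p (fun x => f x / t) ≤ 1}

def MemVLp {X : Type*} [MeasurableSpace X] (μ : Measure X)
    (p : X → ℝ≥0∞) (f : X → ℝ) : Prop :=
  Measurable f ∧ ∃ l : ℝ, 0 < l ∧ vModular μ p (fun x => f x / l) < ⊤

theorem vLp_subset_of_exponent_le {X : Type*} [MeasurableSpace X]
    (μ : Measure X) [IsFiniteMeasure μ] (p q : X → ℝ≥0∞)
    (hp : ∀ x, 1 ≤ p x) (hq : ∀ x, 1 ≤ q x)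
    (hpq : ∀ᵐ x ∂μ, p x ≤ q x) :
    ∀ f : X → ℝ, MemVLp μ q f → MemVLp μ p f := by
  rintro f ⟨hf, l, hl, hfin⟩
  refine ⟨hf, ?_⟩
  simp only [vModular] at hfin
  obtain ⟨hI, hS⟩ := ENNReal.add_lt_top.mp hfin
  set S : ℝ≥0∞ := essSup (fun x => ENNReal.ofReal |f x / l|) (μ.restrict {x | q x = ⊤})
    with hSdef
  set K : ℝ := max S.toReal 1 with hKdef
  have hK1 : (1 : ℝ) ≤ K := le_max_right _ _
  have hK0 : (0 : ℝ) < K := lt_of_lt_of_le one_pos hK1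
  refine ⟨l * K, mul_pos hl hK0, ?_⟩
  -- notation
  set G : X → ℝ≥0∞ := fun x => ENNReal.ofReal (|f x / l| ^ (q x).toReal) with hGdef
  have habs : ∀ x, |f x / (l * K)| = |f x / l| / K := by
    intro x
    rw [← div_div, abs_div, abs_of_pos hK0]
  -- the measurable "bad" set where f/l is too big
  set B : Set X := {x | ¬ ENNReal.ofReal |f x / l| ≤ S} with hBdef
  have hBnull : μ (B ∩ {x | q x = ⊤}) = 0 := by
    have h2 : ∀ᵐ x ∂(μ.restrict {x | q x = ⊤}), ENNReal.ofReal |f x / l| ≤ S :=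
      ENNReal.ae_le_essSup _
    have hBmeas : MeasurableSet B := by
      have : Measurable fun x => ENNReal.ofReal |f x / l| :=
        (hf.div_const l).abs.ennreal_ofReal
      exact (measurableSet_le this measurable_const).compl
    have := Measure.restrict_apply (μ := μ) (s := {x | q x = ⊤}) hBmeas
    rw [← this]
    exact h2
  have hpqnull : μ {x | ¬ p x ≤ q x} = 0 := hpq
  -- master pointwise bound
  have hmaster : ∀ᵐ x ∂μ,
      ENNReal.ofReal (|f x / (l * K)| ^ (p x).toReal)
        ≤ 1 + ({x | q x ≠ ⊤}).indicator G x := by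
    have hbad : μ ((B ∩ {x | q x = ⊤}) ∪ {x | ¬ p x ≤ q x}) = 0 :=
      measure_union_null hBnull hpqnull
    refine (measure_mono_null ?_ hbad : μ _ = 0)
    intro x hx
    by_contra hxbad
    apply hx
    simp only [Set.mem_union, Set.mem_inter_iff, Set.mem_setOf_eq, not_or, not_and,
      not_not] at hxbad
    obtain ⟨hnB, hple⟩ := hxbad
    show ENNReal.ofReal (|f x / (l * K)| ^ (p x).toReal) ≤ 1 + ({x | q x ≠ ⊤}).indicator G x
    by_cases hqx : q x = ⊤
    · -- then x ∉ B, so |f x / l| ≤ K, so |f x / (l*K)| ≤ 1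
      have hle : |f x / l| ≤ S.toReal := by
        have hle' : ENNReal.ofReal |f x / l| ≤ S := by
          by_contra hB
          exact hnB hB hqx
        exact (ENNReal.ofReal_le_iff_le_toReal hS.ne).mp hle'
      have ha1 : |f x / (l * K)| ≤ 1 := by
        rw [habs, div_le_one hK0]
        exact hle.trans (le_max_left _ _)
      calc ENNReal.ofReal (|f x / (l * K)| ^ (p x).toReal)
          ≤ ENNReal.ofReal 1 := by
            exact ENNReal.ofReal_le_ofReal
              (Real.rpow_le_one (abs_nonneg _) ha1 ENNReal.toReal_nonneg)
        _ = 1 := ENNReal.ofReal_one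
        _ ≤ 1 + _ := le_self_add
    · -- q x finite
      have hind : ({x | q x ≠ ⊤}).indicator G x = G x :=
        Set.indicator_of_mem (show x ∈ {x | q x ≠ ⊤} from hqx) G
      rw [hind]
      have hrs : (p x).toReal ≤ (q x).toReal := ENNReal.toReal_mono hqx hple
      set a : ℝ := |f x / (l * K)| with hadef
      have ha0 : 0 ≤ a := abs_nonneg _
      have haa : a ≤ |f x / l| := by
        rw [hadef, habs]
        exact div_le_self (abs_nonneg _) hK1
      by_cases ha1 : a ≤ 1
      · calc ENNReal.ofReal (a ^ (p x).toReal)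
            ≤ ENNReal.ofReal 1 := ENNReal.ofReal_le_ofReal
              (Real.rpow_le_one ha0 ha1 ENNReal.toReal_nonneg)
          _ = 1 := ENNReal.ofReal_one
          _ ≤ 1 + G x := le_self_add
      · push_neg at ha1
        have h1 : a ^ (p x).toReal ≤ a ^ (q x).toReal :=
          Real.rpow_le_rpow_of_exponent_le ha1.le hrs
        have h2 : a ^ (q x).toReal ≤ |f x / l| ^ (q x).toReal :=
          Real.rpow_le_rpow ha0 haa ENNReal.toReal_nonneg
        calc ENNReal.ofReal (a ^ (p x).toReal)
            ≤ G x := ENNReal.ofReal_le_ofReal (h1.trans h2)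
          _ ≤ 1 + G x := le_add_self
  -- integral part
  have hIp : (∫⁻ x in {x | p x < ⊤},
      ENNReal.ofReal (|f x / (l * K)| ^ (p x).toReal) ∂μ) < ⊤ := by
    have step1 : (∫⁻ x in {x | p x < ⊤},
        ENNReal.ofReal (|f x / (l * K)| ^ (p x).toReal) ∂μ)
        ≤ ∫⁻ x in {x | p x < ⊤}, (1 + ({x | q x ≠ ⊤}).indicator G x) ∂μ :=
      lintegral_mono_ae (ae_restrict_of_ae hmaster)
    have step2 : (∫⁻ x in {x | p x < ⊤}, (1 + ({x | q x ≠ ⊤}).indicator G x) ∂μ)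
        ≤ ∫⁻ x, (1 + ({x | q x ≠ ⊤}).indicator G x) ∂μ :=
      setLIntegral_le_lintegral _ _
    have step3 : (∫⁻ x, (1 + ({x | q x ≠ ⊤}).indicator G x) ∂μ)
        = μ Set.univ + ∫⁻ x, ({x | q x ≠ ⊤}).indicator G x ∂μ := by
      rw [lintegral_add_left measurable_const, lintegral_const, one_mul]
    have step4 : (∫⁻ x, ({x | q x ≠ ⊤}).indicator G x ∂μ)
        ≤ ∫⁻ x in {x | q x ≠ ⊤}, G x ∂μ := lintegral_indicator_le G _
    have hsets : {x | q x ≠ ⊤} = {x | q x < ⊤} := by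
      ext x; simp [lt_top_iff_ne_top]
    refine lt_of_le_of_lt (step1.trans (step2.trans step3.le)) ?_
    refine ENNReal.add_lt_top.mpr ⟨measure_lt_top μ _, lt_of_le_of_lt step4 ?_⟩
    rw [hsets]
    exact hI
  -- essSup part
  have hSp : essSup (fun x => ENNReal.ofReal |f x / (l * K)|)
      (μ.restrict {x | p x = ⊤}) < ⊤ := by
    have hrle : μ.restrict {x | p x = ⊤} ≤ μ.restrict {x | q x = ⊤} := by
      set N : Set X := toMeasurable μ {x | ¬ p x ≤ q x} with hNdef
      have hNnull : μ N = 0 := by rw [hNdef, measure_toMeasurable]; exact hpqnull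
      have hsub : {x | p x = ⊤} ⊆ {x | q x = ⊤} ∪ N := by
        intro x hx
        by_cases hle : p x ≤ q x
        · left
          exact top_le_iff.mp (hx ▸ hle)
        · right
          exact subset_toMeasurable μ _ hle
      calc μ.restrict {x | p x = ⊤}
          ≤ μ.restrict ({x | q x = ⊤} ∪ N) := Measure.restrict_mono hsub le_rfl
        _ ≤ μ.restrict {x | q x = ⊤} + μ.restrict N := Measure.restrict_union_le _ _
        _ = μ.restrict {x | q x = ⊤} := by
            rw [Measure.restrict_eq_zero.mpr hNnull, add_zero]
      
    calc essSup (fun x => ENNReal.ofReal |f x / (l * K)|) (μ.restrict {x | p x = ⊤})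
        ≤ essSup (fun x => ENNReal.ofReal |f x / (l * K)|) (μ.restrict {x | q x = ⊤}) :=
          essSup_mono_measure (Measure.absolutelyContinuous_of_le hrle)
      _ ≤ S :=
          essSup_mono_ae (Eventually.of_forall fun x => ENNReal.ofReal_le_ofReal
            (by rw [habs]; exact div_le_self (abs_nonneg _) hK1))
      _ < ⊤ := hS
  simp only [vModular]
  exact ENNReal.add_lt_top.mpr ⟨hIp, hSp⟩
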